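/- arXiv:2303.06953 — 2 statements merged into one kernel-verified Lean document; each statement's English description precedes it below -/
import Mathlib

section
/- Let I be a stable monomial ideal of the exterior algebra E = K⟨e_1,...,e_n⟩. Then I has linear quotients with respect to the reverse degree lexicographic order on its minimal generators, and for every u ∈ G(I), set(u) = {1, 2, ..., m(u)}, where m(u) = max supp(u). -/
open ExteriorAlgebra

/-- The `i`-th basis monomial `e_i` of the exterior algebra `E = K⟨e_1,…,e_n⟩`. -/
noncomputable def e (K : Type) [Field K] {n : ℕ} (i : Fin n) :
    ExteriorAlgebra K (Fin n → K) :=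
  ι K (Pi.single i 1)

/-- The monomial `e_μ = e_{i_1} ∧ ⋯ ∧ e_{i_d}` for `μ = {i_1 < ⋯ < i_d}`. -/
noncomputable def eMon (K : Type) [Field K] {n : ℕ} (μ : Finset (Fin n)) :
    ExteriorAlgebra K (Fin n → K) :=
  ((μ.sort (· ≤ ·)).map (e K)).prod

/-- The ideal `(u_1, …, u_j)` generated by the monomials `u_i = e_{μ_i}`, `i ≤ j`. -/
noncomputable def Iupto (K : Type) [Field K] {n r : ℕ}
    (μs : Fin r → Finset (Fin n)) (j : Fin r) :
    Ideal (ExteriorAlgebra K (Fin n → K)) :=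
  Ideal.span {v | ∃ i, i ≤ j ∧ v = eMon K (μs i)}

/-- The ideal `(u_1, …, u_{j-1})` generated by the monomials `u_i = e_{μ_i}`, `i < j`. -/
noncomputable def Ibelow (K : Type) [Field K] {n r : ℕ}
    (μs : Fin r → Finset (Fin n)) (j : Fin r) :
    Ideal (ExteriorAlgebra K (Fin n → K)) :=
  Ideal.span {v | ∃ i, i < j ∧ v = eMon K (μs i)}

/-- `set(u_j) = {k : e_k ∈ (u_1,…,u_{j-1}) : (u_j)}`. -/
noncomputable def setIdx (K : Type) [Field K] {n r : ℕ}
    (μs : Fin r → Finset (Fin n)) (j : Fin r) : Set (Fin n) :=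
  {k | e K k * eMon K (μs j) ∈ Ibelow K μs j}

/-- The monomial ideal generated by `u_1, …, u_r` has linear quotients with
respect to this order: each colon ideal `(u_1,…,u_{j-1}) : (u_j)` is generated
by a subset of the variables `e_1, …, e_n`. -/
def LinearQuotients (K : Type) [Field K] {n r : ℕ}
    (μs : Fin r → Finset (Fin n)) : Prop :=
  ∀ j : Fin r, ∃ S : Finset (Fin n),
    {f : ExteriorAlgebra K (Fin n → K) | f * eMon K (μs j) ∈ Ibelow K μs j}
      = (Ideal.span {v | ∃ k ∈ S, v = e K k} : Set (ExteriorAlgebra K (Fin n → K)))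

/-- `g(e_ν) = u_j`: `j` is the least index with `e_ν ∈ (u_1, …, u_j)`. -/
noncomputable def IsDecomp (K : Type) [Field K] {n r : ℕ}
    (μs : Fin r → Finset (Fin n)) (ν : Finset (Fin n)) (j : Fin r) : Prop :=
  eMon K ν ∈ Iupto K μs j ∧ ∀ i, i < j → eMon K ν ∉ Iupto K μs i

/-!
The monomials `e_S` form a `K`-basis of `E`, and a monomial ideal is spanned over `K` by the
monomials divisible by one of its generators. For `u = e_μ` and `T` lying above `m(u)`, the
`e_{T ∪ μ}`-coefficient of `f u` is `± f_T`; hence `(u_1, …, u_{j-1}) : u_j` is generated by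
`e_1, …, e_{m(u_j)}` as soon as `e_k u_j ∈ (u_1, …, u_{j-1})` for `k ≤ m(u_j)` and no earlier
generator divides `e_{T ∪ μ_j}` for `T > m(u_j)`. Stability gives the first fact directly; for the
second, a divisor of smaller degree can be pushed into `μ_j` by repeatedly replacing its largest
index, contradicting minimality, while one of the same degree is excluded by the revlex order.
-/

section Monomials

variable {K : Type} [Field K] {n : ℕ}

noncomputable abbrev monomialBasis (K : Type) [Field K] (n : ℕ) :
    Module.Basis (Finset (Fin n)) K (ExteriorAlgebra K (Fin n → K)) :=
  (Pi.basisFun K (Fin n)).ExteriorAlgebra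

lemma eMon_eq_monomialBasis (μ : Finset (Fin n)) : eMon K μ = monomialBasis K n μ := by
  rw [ExteriorAlgebra.basis_apply_ofCard _ rfl, ιMulti_family, ιMulti_apply, eMon,
    ← Finset.listMap_orderEmbOfFin_finRange μ rfl, List.map_map, List.ofFn_eq_map]
  simp only [Function.comp_def, e, Pi.basisFun_apply]
  rfl

lemma eMon_singleton (k : Fin n) : eMon K {k} = e K k := by
  simp [eMon, Finset.sort_singleton]

lemma coord_eMon (ν μ : Finset (Fin n)) :
    (monomialBasis K n).coord ν (eMon K μ) = if μ = ν then 1 else 0 := by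
  rw [eMon_eq_monomialBasis, Module.Basis.coord_apply, Module.Basis.repr_self,
    Finsupp.single_apply]

lemma eMon_mul_eMon_of_disjoint {S T : Finset (Fin n)} (h : Disjoint S T) :
    ∃ ε : ℤˣ, eMon K S * eMon K T = ε • eMon K (S ∪ T) := by
  simp only [eMon_eq_monomialBasis]
  rw [← Finset.disjUnion_eq_union _ _ h]
  exact ⟨_, basis_mul_of_disjoint _ (Set.powersetCard.ofCard rfl)
    (Set.powersetCard.ofCard rfl) h⟩

lemma eMon_mul_eMon_of_not_disjoint {S T : Finset (Fin n)} (h : ¬ Disjoint S T) :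
    eMon K S * eMon K T = 0 := by
  simp only [eMon_eq_monomialBasis]
  exact basis_mul_of_not_disjoint _ (Set.powersetCard.ofCard rfl)
    (Set.powersetCard.ofCard rfl) h

lemma e_mul_eMon_of_mem {k : Fin n} {S : Finset (Fin n)} (hk : k ∈ S) :
    e K k * eMon K S = 0 := by
  rw [← eMon_singleton, eMon_mul_eMon_of_not_disjoint (by simpa using hk)]

lemma e_mul_eMon_of_notMem {k : Fin n} {S : Finset (Fin n)} (hk : k ∉ S) :
    ∃ ε : ℤˣ, e K k * eMon K S = ε • eMon K (insert k S) := by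
  rw [← eMon_singleton, Finset.insert_eq]
  exact eMon_mul_eMon_of_disjoint (by simpa using hk)

lemma eMon_mem_span_eMon_of_subset {μ ν : Finset (Fin n)} (h : μ ⊆ ν) :
    eMon K ν ∈ Submodule.span (ExteriorAlgebra K (Fin n → K)) {eMon K μ} := by
  obtain ⟨ε, hε⟩ :=
    eMon_mul_eMon_of_disjoint (K := K) (Finset.sdiff_disjoint : Disjoint (ν \ μ) μ)
  rw [Finset.sdiff_union_of_subset h] at hε
  rw [← Submodule.smul_mem_iff' _ ε, ← hε]
  exact Submodule.smul_mem _ _ (Submodule.mem_span_singleton_self _)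

end Monomials

section MonomialIdeal

variable {K : Type} [Field K] {n : ℕ} {G : Set (Finset (Fin n))}

lemma mem_span_eMon_of_mem_ideal {x : ExteriorAlgebra K (Fin n → K)}
    (hx : x ∈ Ideal.span (eMon K '' G)) :
    x ∈ Submodule.span K (eMon K '' {S | ∃ μ ∈ G, μ ⊆ S}) := by
  set W := Submodule.span K (eMon K '' {S | ∃ μ ∈ G, μ ⊆ S})
  have eMon_mul_mem : ∀ T, ∀ y ∈ W, eMon K T * y ∈ W := by
    intro T y hy
    induction hy using Submodule.span_induction with
    | mem y hy =>
      obtain ⟨S, ⟨μ, hμ, hμS⟩, rfl⟩ := hy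
      by_cases hTS : Disjoint T S
      · obtain ⟨ε, hε⟩ := eMon_mul_eMon_of_disjoint (K := K) hTS
        rw [hε, Submodule.smul_mem_iff' W ε]
        exact Submodule.subset_span ⟨T ∪ S, ⟨μ, hμ, hμS.trans Finset.subset_union_right⟩, rfl⟩
      · rw [eMon_mul_eMon_of_not_disjoint hTS]
        exact W.zero_mem
    | zero => rw [mul_zero]; exact W.zero_mem
    | add y z _ _ hy hz => rw [mul_add]; exact W.add_mem hy hz
    | smul c y _ hy => rw [mul_smul_comm]; exact W.smul_mem c hy
  have mul_mem : ∀ a, ∀ y ∈ W, a * y ∈ W := by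
    intro a y hy
    induction (monomialBasis K n).mem_span a using Submodule.span_induction with
    | mem a ha =>
      obtain ⟨T, rfl⟩ := ha
      rw [← eMon_eq_monomialBasis]
      exact eMon_mul_mem T y hy
    | zero => rw [zero_mul]; exact W.zero_mem
    | add a b _ _ ha hb => rw [add_mul]; exact W.add_mem ha hb
    | smul c a _ ha => rw [smul_mul_assoc]; exact W.smul_mem c ha
  induction hx using Submodule.span_induction with
  | mem x hx =>
    obtain ⟨μ, hμ, rfl⟩ := hx
    exact Submodule.subset_span ⟨μ, ⟨μ, hμ, subset_rfl⟩, rfl⟩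
  | zero => exact W.zero_mem
  | add x y _ _ hx hy => exact W.add_mem hx hy
  | smul a x _ hx => exact mul_mem a x hx

lemma coord_eq_zero_of_mem_ideal {ν : Finset (Fin n)} (hν : ∀ μ ∈ G, ¬ μ ⊆ ν)
    {x : ExteriorAlgebra K (Fin n → K)} (hx : x ∈ Ideal.span (eMon K '' G)) :
    (monomialBasis K n).coord ν x = 0 := by
  have hle : Submodule.span K (eMon K '' {S | ∃ μ ∈ G, μ ⊆ S})
      ≤ LinearMap.ker ((monomialBasis K n).coord ν) := by
    rw [Submodule.span_le]
    rintro _ ⟨S, ⟨μ, hμ, hμS⟩, rfl⟩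
    rw [SetLike.mem_coe, LinearMap.mem_ker, coord_eMon,
      if_neg (by rintro rfl; exact hν μ hμ hμS)]
  exact hle (mem_span_eMon_of_mem_ideal hx)

lemma eMon_mem_ideal_iff {ν : Finset (Fin n)} :
    eMon K ν ∈ Ideal.span (eMon K '' G) ↔ ∃ μ ∈ G, μ ⊆ ν := by
  constructor
  · intro hν
    by_contra! h
    have := coord_eq_zero_of_mem_ideal h hν
    rw [coord_eMon, if_pos rfl] at this
    exact one_ne_zero this
  · rintro ⟨μ, hμ, hμν⟩
    have hμI : eMon K μ ∈ Ideal.span (eMon K '' G) := Ideal.subset_span ⟨μ, hμ, rfl⟩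
    exact Submodule.span_le.mpr (Set.singleton_subset_iff.mpr hμI)
      (eMon_mem_span_eMon_of_subset hμν)

lemma eMon_mem_span_e_iff {S T : Finset (Fin n)} :
    eMon K T ∈ Ideal.span {v | ∃ k ∈ S, v = e K k} ↔ ∃ k ∈ S, k ∈ T := by
  have hgen : {v | ∃ k ∈ S, v = e K k} = eMon K '' ((fun k => {k}) '' (S : Set (Fin n))) := by
    ext v
    simp [eMon_singleton, eq_comm]
  rw [hgen, eMon_mem_ideal_iff]
  simp

lemma coord_union_mul_eMon {T μ : Finset (Fin n)} (h : Disjoint T μ) :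
    ∃ ε : ℤˣ, ∀ f : ExteriorAlgebra K (Fin n → K),
      (monomialBasis K n).coord (T ∪ μ) (f * eMon K μ) = ε • (monomialBasis K n).coord T f := by
  obtain ⟨ε, hε⟩ := eMon_mul_eMon_of_disjoint (K := K) h
  refine ⟨ε, fun f => LinearMap.congr_fun (?_ :
    (monomialBasis K n).coord (T ∪ μ) ∘ₗ LinearMap.mulRight K (eMon K μ)
      = ε • (monomialBasis K n).coord T) f⟩
  refine (monomialBasis K n).ext fun S => ?_
  simp only [LinearMap.comp_apply, LinearMap.mulRight_apply, LinearMap.smul_apply,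
    ← eMon_eq_monomialBasis, coord_eMon]
  by_cases hST : S = T
  · subst hST
    rw [hε, LinearMap.map_smul_of_tower, coord_eMon, if_pos rfl, if_pos rfl]
  rw [if_neg hST, smul_zero]
  by_cases hSμ : Disjoint S μ
  · obtain ⟨ε', hε'⟩ := eMon_mul_eMon_of_disjoint (K := K) hSμ
    have hne : S ∪ μ ≠ T ∪ μ := fun hun => hST <| by
      rw [← Finset.union_sdiff_cancel_right hSμ, hun, Finset.union_sdiff_cancel_right h]
    rw [hε', LinearMap.map_smul_of_tower, coord_eMon, if_neg hne, smul_zero]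
  · rw [eMon_mul_eMon_of_not_disjoint hSμ, map_zero]

lemma colon_eq_span_e {μ : Finset (Fin n)} {m : Fin n} (hμ : ∀ x ∈ μ, x ≤ m)
    (hlow : ∀ k ≤ m, e K k * eMon K μ ∈ Ideal.span (eMon K '' G))
    (hhigh : ∀ T : Finset (Fin n), (∀ t ∈ T, m < t) → ∀ ν ∈ G, ¬ ν ⊆ T ∪ μ) :
    {f | f * eMon K μ ∈ Ideal.span (eMon K '' G)}
      = (Ideal.span {v | ∃ k ∈ Finset.Iic m, v = e K k} :
          Set (ExteriorAlgebra K (Fin n → K))) := by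
  set J : Ideal (ExteriorAlgebra K (Fin n → K)) :=
    Ideal.span {v | ∃ k ∈ Finset.Iic m, v = e K k}
  ext f
  constructor
  · intro hf
    rw [SetLike.mem_coe, ← (monomialBasis K n).sum_repr f]
    refine J.sum_mem fun T _ => ?_
    by_cases hlowT : ∃ k ∈ Finset.Iic m, k ∈ T
    · rw [← eMon_eq_monomialBasis, Algebra.smul_def]
      exact J.mul_mem_left _ (eMon_mem_span_e_iff.mpr hlowT)
    have hTm : ∀ t ∈ T, m < t := fun t ht =>
      not_le.mp fun htm => hlowT ⟨t, Finset.mem_Iic.mpr htm, ht⟩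
    obtain ⟨ε, hε⟩ := coord_union_mul_eMon (K := K)
      (Finset.disjoint_left.mpr fun t ht htμ => absurd (hμ t htμ) (not_le.mpr (hTm t ht)))
    have hzero := coord_eq_zero_of_mem_ideal (hhigh T hTm) hf
    rw [hε, smul_eq_zero_iff_eq, Module.Basis.coord_apply] at hzero
    rw [hzero, zero_smul]
    exact J.zero_mem
  · intro hf
    have hle : J ≤ Submodule.comap (LinearMap.toSpanSingleton _ _ (eMon K μ))
        (Ideal.span (eMon K '' G)) := by
      rw [Ideal.span_le]
      rintro _ ⟨k, hk, rfl⟩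
      exact hlow k (Finset.mem_Iic.mp hk)
    exact hle hf

end MonomialIdeal

section Stable

def IsStable (K : Type) [Field K] {n : ℕ} (I : Ideal (ExteriorAlgebra K (Fin n → K))) : Prop :=
  ∀ ν : Finset (Fin n), ∀ hν : ν.Nonempty, eMon K ν ∈ I →
    ∀ k : Fin n, k < ν.max' hν → e K k * eMon K (ν.erase (ν.max' hν)) ∈ I

variable {K : Type} [Field K] {n : ℕ} {I : Ideal (ExteriorAlgebra K (Fin n → K))}

lemma IsStable.insert_erase_max'_mem (hI : IsStable K I) {ν : Finset (Fin n)} (hν : ν.Nonempty)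
    (hνI : eMon K ν ∈ I) {k : Fin n} (hk : k < ν.max' hν) (hkν : k ∉ ν) :
    eMon K (insert k (ν.erase (ν.max' hν))) ∈ I := by
  obtain ⟨ε, hε⟩ := e_mul_eMon_of_notMem (K := K)
    (fun h => hkν (Finset.mem_of_mem_erase h) : k ∉ ν.erase (ν.max' hν))
  rw [← Submodule.smul_mem_iff' I ε, ← hε]
  exact hI ν hν hνI k hk

lemma IsStable.exists_subset_card_eq (hI : IsStable K I) {μ σ : Finset (Fin n)}
    (hσI : eMon K σ ∈ I) (hcard : σ.card ≤ μ.card) (hgt : ∀ x ∈ σ \ μ, ∀ y ∈ μ, y < x) :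
    ∃ τ ⊆ μ, τ.card = σ.card ∧ eMon K τ ∈ I := by
  induction hd : (σ \ μ).card using Nat.strong_induction_on generalizing σ with
  | _ d ih => ?_
  by_cases hsub : σ ⊆ μ
  · exact ⟨σ, hsub, rfl, hσI⟩
  obtain ⟨x, hxσ, hxμ⟩ := Finset.not_subset.mp hsub
  have hσ : σ.Nonempty := ⟨x, hxσ⟩
  set M := σ.max' hσ
  have hMσ : M ∈ σ := σ.max'_mem hσ
  have hMμ : M ∉ μ := fun hMμ =>
    (hgt x (Finset.mem_sdiff.mpr ⟨hxσ, hxμ⟩) M hMμ).not_ge (σ.le_max' x hxσ)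
  obtain ⟨t, htμ, htσ⟩ : ∃ t ∈ μ, t ∉ σ := by
    by_contra! h
    exact hsub (Finset.eq_of_subset_of_card_le h hcard).ge
  have htM : t < M := hgt M (Finset.mem_sdiff.mpr ⟨hMσ, hMμ⟩) t htμ
  have hdiff : insert t (σ.erase M) \ μ = (σ \ μ).erase M := by
    ext y
    simp only [Finset.mem_sdiff, Finset.mem_insert, Finset.mem_erase]
    constructor
    · rintro ⟨rfl | ⟨hyM, hyσ⟩, hyμ⟩
      · exact absurd htμ hyμ
      · exact ⟨hyM, hyσ, hyμ⟩
    · rintro ⟨hyM, hyσ, hyμ⟩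
      exact ⟨Or.inr ⟨hyM, hyσ⟩, hyμ⟩
  have hcard' : (insert t (σ.erase M)).card = σ.card := by
    rw [Finset.card_insert_of_notMem fun h => htσ (Finset.mem_of_mem_erase h),
      Finset.card_erase_add_one hMσ]
  obtain ⟨τ, hτμ, hτcard, hτI⟩ := ih _
    (hd ▸ Finset.card_erase_lt_of_mem (Finset.mem_sdiff.mpr ⟨hMσ, hMμ⟩))
    (hI.insert_erase_max'_mem hσ hσI htM htσ) (hcard'.trans_le hcard)
    (fun y hy => hgt y (Finset.mem_of_mem_erase (hdiff ▸ hy))) (by rw [hdiff])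
  exact ⟨τ, hτμ, hτcard.trans hcard', hτI⟩

end Stable

section RevDegLex

variable {α : Type*} [LinearOrder α]

lemma max'_symmDiff_mem_right {A B : Finset α} (hd : (symmDiff A B).Nonempty) {x : α}
    (hxB : x ∈ B) (hxA : x ∉ A) (hlt : ∀ y ∈ A \ B, y < x) : (symmDiff A B).max' hd ∈ B := by
  have hx : x ∈ symmDiff A B := Finset.mem_symmDiff.mpr (Or.inr ⟨hxB, hxA⟩)
  rcases Finset.mem_symmDiff.mp ((symmDiff A B).max'_mem hd) with hAB | ⟨hB, _⟩
  · exact absurd ((symmDiff A B).le_max' x hx) (not_le.mpr (hlt _ (Finset.mem_sdiff.mpr hAB)))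
  · exact hB

def RevDegLexLT (μ ν : Finset α) : Prop :=
  μ.card < ν.card ∨
    (μ.card = ν.card ∧ μ ≠ ν ∧ ∀ hd : (symmDiff μ ν).Nonempty, (symmDiff μ ν).max' hd ∈ ν)

lemma RevDegLexLT.asymm {μ ν : Finset α} (h : RevDegLexLT μ ν) : ¬ RevDegLexLT ν μ := by
  rintro (h' | ⟨hc', _, hmax'⟩) <;> rcases h with h | ⟨hc, hne, hmax⟩
  · omega
  · omega
  · omega
  · have hd : (symmDiff μ ν).Nonempty := by
      rw [Finset.symmDiff_nonempty]; exact hne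
    have hz := hmax' (symmDiff_comm μ ν ▸ hd)
    simp only [symmDiff_comm ν μ] at hz
    rcases Finset.mem_symmDiff.mp ((symmDiff μ ν).max'_mem hd) with ⟨_, h⟩ | ⟨_, h⟩
    · exact h (hmax hd)
    · exact h hz

end RevDegLex

section Generators

variable {K : Type} [Field K] {n r : ℕ} {μs : Fin r → Finset (Fin n)}

lemma lt_of_revDegLexLT (horder : ∀ i j : Fin r, i < j → RevDegLexLT (μs i) (μs j))
    {i j : Fin r} (h : RevDegLexLT (μs i) (μs j)) : i < j := by
  rcases lt_trichotomy i j with hij | rfl | hji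
  · exact hij
  · exact absurd h h.asymm
  · exact absurd (horder j i hji) h.asymm

lemma exists_lt_subset_insert (hI : IsStable K (Ideal.span (eMon K '' Set.range μs)))
    (horder : ∀ i j : Fin r, i < j → RevDegLexLT (μs i) (μs j)) {j : Fin r}
    (hne : (μs j).Nonempty) {k : Fin n} (hk : k < (μs j).max' hne) (hkj : k ∉ μs j) :
    ∃ i < j, μs i ⊆ insert k (μs j) := by
  set m := (μs j).max' hne
  have hmj : m ∈ μs j := (μs j).max'_mem hne
  set τ := insert k ((μs j).erase m)
  have hkτ : k ∉ (μs j).erase m := fun h => hkj (Finset.mem_of_mem_erase h)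
  have hτI := hI.insert_erase_max'_mem hne (Ideal.subset_span ⟨_, ⟨j, rfl⟩, rfl⟩) hk hkj
  obtain ⟨_, ⟨i, rfl⟩, hiτ⟩ := eMon_mem_ideal_iff.mp hτI
  have hτj : τ ⊆ insert k (μs j) := Finset.insert_subset_insert _ (Finset.erase_subset _ _)
  refine ⟨i, lt_of_revDegLexLT horder ?_, hiτ.trans hτj⟩
  have hτcard : τ.card = (μs j).card := by
    rw [Finset.card_insert_of_notMem hkτ, Finset.card_erase_add_one hmj]
  rcases (Finset.card_le_card hiτ).lt_or_eq with hlt | heq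
  · exact Or.inl (hτcard ▸ hlt)
  have hiτ : μs i = τ := Finset.eq_of_subset_of_card_le hiτ heq.ge
  have hmτ : m ∉ τ := by
    simp only [τ, Finset.mem_insert, Finset.mem_erase, ne_eq, not_true_eq_false, false_and,
      or_false]
    exact hk.ne'
  refine Or.inr ⟨heq.trans hτcard, fun h => hmτ (hiτ ▸ h ▸ hmj), fun hd => ?_⟩
  refine max'_symmDiff_mem_right hd hmj (hiτ ▸ hmτ) fun y hy => ?_
  rw [hiτ, Finset.mem_sdiff] at hy
  rcases Finset.mem_insert.mp hy.1 with rfl | hy'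
  · exact hk
  · exact absurd (Finset.mem_of_mem_erase hy') hy.2

lemma not_subset_union_of_lt (hI : IsStable K (Ideal.span (eMon K '' Set.range μs)))
    (hmin : ∀ i j, i ≠ j → ¬ μs i ⊆ μs j)
    (horder : ∀ i j : Fin r, i < j → RevDegLexLT (μs i) (μs j)) {i j : Fin r} (hij : i < j)
    (hne : (μs j).Nonempty) {T : Finset (Fin n)} (hT : ∀ t ∈ T, (μs j).max' hne < t) :
    ¬ μs i ⊆ T ∪ μs j := by
  intro hsub
  have hgt : ∀ x ∈ μs i \ μs j, ∀ y ∈ μs j, y < x := fun x hx y hy =>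
    ((μs j).le_max' y hy).trans_lt
      (hT x ((Finset.mem_union.mp (hsub (Finset.mem_sdiff.mp hx).1)).resolve_right
        (Finset.mem_sdiff.mp hx).2))
  obtain ⟨x, hxi, hxj⟩ := Finset.not_subset.mp (hmin i j hij.ne)
  rcases horder i j hij with hcard | ⟨-, -, hmax⟩
  · obtain ⟨τ, hτj, hτcard, hτI⟩ := hI.exists_subset_card_eq
      (Ideal.subset_span ⟨_, ⟨i, rfl⟩, rfl⟩) hcard.le hgt
    obtain ⟨_, ⟨l, rfl⟩, hlτ⟩ := eMon_mem_ideal_iff.mp hτI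
    have hlj : l ≠ j := by
      rintro rfl
      exact absurd (Finset.card_le_card hlτ) (by omega)
    exact hmin l j hlj (hlτ.trans hτj)
  · have hx : x ∈ symmDiff (μs i) (μs j) := Finset.mem_symmDiff.mpr (Or.inl ⟨hxi, hxj⟩)
    have hd : (symmDiff (μs i) (μs j)).Nonempty := ⟨x, hx⟩
    have hxm := hgt x (Finset.mem_sdiff.mpr ⟨hxi, hxj⟩) _ (hmax hd)
    exact absurd (Finset.le_max' _ x hx) (not_le.mpr hxm)

lemma e_mul_eMon_mem_span_lt (hI : IsStable K (Ideal.span (eMon K '' Set.range μs)))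
    (horder : ∀ i j : Fin r, i < j → RevDegLexLT (μs i) (μs j)) {j : Fin r}
    (hne : (μs j).Nonempty) {k : Fin n} (hk : k ≤ (μs j).max' hne) :
    e K k * eMon K (μs j) ∈ Ideal.span (eMon K '' (μs '' Set.Iio j)) := by
  by_cases hkj : k ∈ μs j
  · rw [e_mul_eMon_of_mem hkj]
    exact Ideal.zero_mem _
  have hk' : k < (μs j).max' hne := hk.lt_of_ne fun h => hkj (h ▸ (μs j).max'_mem hne)
  obtain ⟨i, hij, hsub⟩ := exists_lt_subset_insert hI horder hne hk' hkj
  obtain ⟨ε, hε⟩ := e_mul_eMon_of_notMem (K := K) hkj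
  rw [hε, Submodule.smul_mem_iff', eMon_mem_ideal_iff]
  exact ⟨_, ⟨i, hij, rfl⟩, hsub⟩

end Generators

lemma Ibelow_eq_span_image {K : Type} [Field K] {n r : ℕ} (μs : Fin r → Finset (Fin n))
    (j : Fin r) : Ibelow K μs j = Ideal.span (eMon K '' (μs '' Set.Iio j)) := by
  rw [Ibelow]
  congr 1
  ext v
  simp [eq_comm]

/-- Let `I` be a stable monomial ideal of `E = K⟨e_1,…,e_n⟩` with minimal
monomial generators `u_1, …, u_r` (no generator divides another) listed in the
reverse degree lexicographic order. Then `I` has linear quotients with respect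
to this order and, for every generator `u_j`, `set(u_j) = {1, …, m(u_j)}` where
`m(u) = max supp(u)`. -/
theorem stmt10 {K : Type} [Field K] {n r : ℕ} (μs : Fin r → Finset (Fin n))
    (hne : ∀ j, (μs j).Nonempty)
    (hmin : ∀ i j, i ≠ j → ¬ μs i ⊆ μs j)
    -- the generators are listed in reverse degree lexicographic order
    (horder : ∀ i j : Fin r, i < j →
      (μs i).card < (μs j).card ∨
      ((μs i).card = (μs j).card ∧ μs i ≠ μs j ∧
        ∀ hd : (symmDiff (μs i) (μs j)).Nonempty,
          (symmDiff (μs i) (μs j)).max' hd ∈ μs j))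
    -- `I = (u_1, …, u_r)` is stable
    (hstable : ∀ ν : Finset (Fin n), ∀ hν : ν.Nonempty,
      eMon K ν ∈ Ideal.span {v | ∃ i : Fin r, v = eMon K (μs i)} →
      ∀ k : Fin n, k < ν.max' hν →
        e K k * eMon K (ν.erase (ν.max' hν))
          ∈ Ideal.span {v | ∃ i : Fin r, v = eMon K (μs i)}) :
    LinearQuotients K μs ∧
    ∀ j : Fin r, setIdx K μs j = {k : Fin n | k ≤ (μs j).max' (hne j)} := by
  have hI : IsStable K (Ideal.span (eMon K '' Set.range μs)) := by
    have hgen : {v | ∃ i, v = eMon K (μs i)} = eMon K '' Set.range μs := by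
      ext v
      simp [eq_comm]
    rwa [hgen] at hstable
  have hcolon : ∀ j, {f | f * eMon K (μs j) ∈ Ibelow K μs j} =
      (Ideal.span {v | ∃ k ∈ Finset.Iic ((μs j).max' (hne j)), v = e K k} :
        Set (ExteriorAlgebra K (Fin n → K))) := by
    intro j
    rw [Ibelow_eq_span_image]
    refine colon_eq_span_e (fun x hx => (μs j).le_max' x hx)
      (fun k hk => e_mul_eMon_mem_span_lt hI horder (hne j) hk) ?_
    rintro T hT _ ⟨i, hij, rfl⟩
    exact not_subset_union_of_lt hI hmin horder hij (hne j) hT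
  refine ⟨fun j => ⟨_, hcolon j⟩, fun j => Set.ext fun k => ?_⟩
  change e K k ∈ {f | f * eMon K (μs j) ∈ Ibelow K μs j} ↔ _
  rw [hcolon j, SetLike.mem_coe, ← eMon_singleton, eMon_mem_span_e_iff]
  simp
end

section
/- Let I be a monomial ideal of E with linear quotients and decomposition function g : M(I) → G(I). If u ∈ M(I) can be written u = v·w with v ∈ G(I), w a monomial, and set(v) ∩ supp(w) = ∅, then v = g(u). Hence the decomposition function is the unique function satisfying the factorization property of Lemma (a). -/
open ExteriorAlgebra

/-!
Since `supp v ⊆ ν`, `e_ν = ±e_σ·v` with `σ = ν ∖ supp v`, so `e_ν ∈ (u_1, …, u_l)` and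
`g(e_ν) = u_j` with `j ≤ l`. If `j < l`, then `e_σ` lies in the colon ideal
`(u_1, …, u_{l-1}) : v`, which by linear quotients is generated by variables `e_k` with
`k ∈ set(v)`, hence `k ∉ σ`. The algebra endomorphism of `E` sending these `e_k` to `0` and
fixing the other variables kills that ideal but fixes `e_σ ≠ 0`.
-/

open Set Set.powersetCard in
theorem eMon_eq_basis {K : Type} [Field K] {n : ℕ} (σ : Finset (Fin n)) :
    eMon K σ = (Pi.basisFun K (Fin n)).ExteriorAlgebra σ := by
  rw [ExteriorAlgebra.basis_apply_ofCard _ rfl, ιMulti_family, ιMulti_apply, eMon,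
    ← List.ofFn_getElem_eq_map, List.ofFn_congr (Finset.length_sort _)]
  simp [ofFinEmbEquiv_symm_apply, Finset.orderEmbOfFin_apply, e]

theorem eMon_ne_zero {K : Type} [Field K] {n : ℕ} (σ : Finset (Fin n)) : eMon K σ ≠ 0 := by
  rw [eMon_eq_basis]
  exact Module.Basis.ne_zero _ σ

open Set Set.powersetCard in
theorem exists_eMon_mul_eMon_eq_smul {K : Type} [Field K] {n : ℕ} {a b : Finset (Fin n)}
    (h : Disjoint a b) : ∃ ε : ℤˣ, eMon K a * eMon K b = ε • eMon K (a ∪ b) := by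
  let s : powersetCard (Fin n) a.card := ofCard rfl
  let t : powersetCard (Fin n) b.card := ofCard rfl
  have hst : Disjoint s.val t.val := h
  have hunion : (disjUnion hst).val = a ∪ b := Finset.disjUnion_eq_union a b h
  have hmul := ExteriorAlgebra.basis_mul_of_disjoint (Pi.basisFun K (Fin n)) s t hst
  rw [hunion] at hmul
  exact ⟨_, by simp only [eMon_eq_basis]; exact hmul⟩

theorem exists_eMon_sdiff_mul_eMon_eq_smul {K : Type} [Field K] {n : ℕ} {a b : Finset (Fin n)}
    (h : a ⊆ b) : ∃ ε : ℤˣ, eMon K (b \ a) * eMon K a = ε • eMon K b := by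
  simpa only [Finset.sdiff_union_of_subset h] using
    exists_eMon_mul_eMon_eq_smul (K := K) (Finset.sdiff_disjoint (s := a) (t := b))

theorem eMon_notMem_span_e_of_disjoint {K : Type} [Field K] {n : ℕ} {S σ : Finset (Fin n)}
    (h : Disjoint S σ) : eMon K σ ∉ Ideal.span {v | ∃ k ∈ S, v = e K k} := by
  let f := (Pi.basisFun K (Fin n)).constr K fun i => if i ∈ S then 0 else Pi.single i (1 : K)
  have hf (k : Fin n) : ExteriorAlgebra.map f (e K k) = if k ∈ S then 0 else e K k := by
    have := (Pi.basisFun K (Fin n)).constr_basis K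
      (fun i => if i ∈ S then 0 else Pi.single i (1 : K)) k
    rw [Pi.basisFun_apply] at this
    rw [e, map_apply_ι, this]
    split_ifs <;> simp
  have hker : Ideal.span {v | ∃ k ∈ S, v = e K k} ≤ RingHom.ker (ExteriorAlgebra.map f) :=
    Ideal.span_le.2 (by rintro _ ⟨k, hk, rfl⟩; simp [hf, hk])
  have hfix : ExteriorAlgebra.map f (eMon K σ) = eMon K σ := by
    rw [eMon, map_list_prod, List.map_map]
    congr 1
    refine List.map_congr_left fun k hk => ?_
    rw [Function.comp_apply, hf, if_neg (Finset.disjoint_right.1 h ((Finset.mem_sort _).1 hk))]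
  intro hmem
  have hzero : ExteriorAlgebra.map f (eMon K σ) = 0 := RingHom.mem_ker.1 (hker hmem)
  exact eMon_ne_zero σ (hfix.symm.trans hzero)

theorem Iupto_le_Ibelow {K : Type} [Field K] {n r : ℕ} (μs : Fin r → Finset (Fin n))
    {i j : Fin r} (h : i < j) : Iupto K μs i ≤ Ibelow K μs j :=
  Ideal.span_mono fun _ ⟨k, hk, hv⟩ => ⟨k, hk.trans_lt h, hv⟩

theorem eMon_mul_notMem_Ibelow {K : Type} [Field K] {n r : ℕ} {μs : Fin r → Finset (Fin n)}
    (hlq : LinearQuotients K μs) (l : Fin r) {σ : Finset (Fin n)}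
    (hσ : Disjoint (setIdx K μs l) ↑σ) : eMon K σ * eMon K (μs l) ∉ Ibelow K μs l := by
  obtain ⟨S, hS⟩ := hlq l
  have hS_setIdx (k : Fin n) (hk : k ∈ S) : k ∈ setIdx K μs l :=
    show e K k ∈ {f | f * eMon K (μs l) ∈ Ibelow K μs l} from hS ▸ Ideal.subset_span ⟨k, hk, rfl⟩
  have hSσ : Disjoint S σ :=
    Finset.disjoint_left.2 fun k hk => Set.disjoint_left.1 hσ (hS_setIdx k hk)
  intro hmem
  have hσ_span : eMon K σ ∈ (Ideal.span {v | ∃ k ∈ S, v = e K k} : Set _) := hS ▸ hmem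
  exact eMon_notMem_span_e_of_disjoint hSσ hσ_span

/-- Let `I` have linear quotients with respect to `u_1, …, u_r` and let `g` be
the decomposition function. If a monomial `u = e_ν ∈ M(I)` can be written as
`u = v·w` with `v = u_l ∈ G(I)`, `w` a monomial, and `set(v) ∩ supp(w) = ∅`,
then `v = g(u)`; i.e. `g` is uniquely determined by the factorization property. -/
theorem stmt16 {K : Type} [Field K] {n r : ℕ} (μs : Fin r → Finset (Fin n))
    (hlq : LinearQuotients K μs)
    (ν : Finset (Fin n)) (l : Fin r)
    (hdiv : μs l ⊆ ν) (hset : setIdx K μs l ∩ ↑(ν \ μs l) = ∅)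
    (j : Fin r) (hg : IsDecomp K μs ν j) :
    μs l = μs j := by
  obtain ⟨ε, hε⟩ := exists_eMon_sdiff_mul_eMon_eq_smul (K := K) hdiv
  have hν_l : eMon K ν ∈ Iupto K μs l := by
    rw [← Submodule.smul_mem_iff' _ ε, ← hε]
    exact Ideal.mul_mem_left _ _ (Ideal.subset_span ⟨l, le_rfl, rfl⟩)
  have hjl : j ≤ l := not_lt.1 fun hlj => hg.2 l hlj hν_l
  obtain rfl | hjl := hjl.eq_or_lt
  · rfl
  have hν_below : eMon K ν ∈ Ibelow K μs l := Iupto_le_Ibelow μs hjl hg.1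
  refine absurd ?_ (eMon_mul_notMem_Ibelow hlq l (Set.disjoint_iff_inter_eq_empty.2 hset))
  rw [hε]
  exact (Submodule.smul_mem_iff' _ ε).2 hν_below
end
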